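/- Let m ≥ 1 be a natural number, ϖ_m = 2∫_0^1 (1-t^m)^(-1/2) dt, and let φ : ℝ → ℝ satisfy: x = ∫_0^{φ(x)} (1-t^m)^(-1/2) dt and 0 ≤ φ(x) ≤ 1 for all x ∈ [0, ϖ_m/2], and φ(ϖ_m - x) = φ(x) for all x ∈ [0, ϖ_m]. Define I(n) = ∫_0^{ϖ_m} φ(x)^n dx, and define Γ_M(n,k) by Γ_M(0,k) = 1 and Γ_M(n+1,k) = (Mn+k)·Γ_M(n,k). Then for all natural numbers n ≥ 1, I(mn)·Γ_{2m}(n, m+2) = Γ_{2m}(n, 2)·ϖ_m. -/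

import Mathlib

/-!
Write `l(r) = ∫₀^r (1 - t^m)^(-1/2) dt` and `J(k) = ∫₀¹ t^k (1 - t^m)^(-1/2) dt`. The hypotheses
make `φ` a left inverse of the strictly increasing `l` on `[0, 1]`, and `l` maps `(0, 1)` onto
`(0, ϖ/2)`. By the symmetry `φ(ϖ - x) = φ(x)` and the substitution `x = l(t)`, `I(k) = 2 J(k)`.
Integrating the derivative of `t^(k+1) √(1 - t^m)`, which vanishes at `0` and `1`, over `[0, 1]`
gives `(2k + m + 2) J(k + m) = (2k + 2) J(k)`; iterating it `n` times from `J(0) = ϖ/2` yields the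
product formula.
-/

/-- The congruence Gamma function `Γ_M(n, k)`, defined recursively by
`Γ_M(0, k) = 1` and `Γ_M(n+1, k) = (M n + k) Γ_M(n, k)`. -/
noncomputable def congGamma (M : ℕ) : ℕ → ℕ → ℝ
  | 0, _ => 1
  | n + 1, k => ((M * n + k : ℕ) : ℝ) * congGamma M n k

open MeasureTheory Set intervalIntegral

lemma one_sub_pow_pos {m : ℕ} (hm : m ≠ 0) {t : ℝ} (ht : t ∈ Ico (0 : ℝ) 1) : 0 < 1 - t ^ m :=
  sub_pos.2 (pow_lt_one₀ ht.1 ht.2 hm)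

lemma integral_eq_two_mul_integral_half_of_symm {f : ℝ → ℝ} {a : ℝ} (ha : 0 ≤ a)
    (hf : IntervalIntegrable f volume 0 (a / 2)) (hsymm : ∀ x ∈ Icc 0 a, f (a - x) = f x) :
    ∫ x in (0 : ℝ)..a, f x = 2 * ∫ x in (0 : ℝ)..a / 2, f x := by
  have hreflect : ∫ x in (0 : ℝ)..a / 2, f (a - x) = ∫ x in (0 : ℝ)..a / 2, f x :=
    integral_congr fun x hx => by
      rw [uIcc_of_le (by linarith)] at hx
      exact hsymm x ⟨hx.1, by linarith [hx.2]⟩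
  have hsecond : IntervalIntegrable f volume (a / 2) a := by
    have h := (hf.comp_sub_left a).symm
    rw [sub_zero, show a - a / 2 = a / 2 by ring] at h
    refine h.congr fun x hx => ?_
    rw [uIoc_of_le (by linarith)] at hx
    exact hsymm x ⟨by linarith [hx.1], hx.2⟩
  have hsecond_eq : ∫ x in a / 2..a, f x = ∫ x in (0 : ℝ)..a / 2, f x := by
    rw [← hreflect, integral_comp_sub_left, sub_zero, show a - a / 2 = a / 2 by ring]
  rw [← integral_add_adjacent_intervals hf hsecond, hsecond_eq]
  ring

lemma mul_congGamma_of_recurrence {m : ℕ} {a : ℕ → ℝ}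
    (h : ∀ k : ℕ, (2 * k + m + 2 : ℝ) * a (k + m) = (2 * k + 2) * a k) (n : ℕ) :
    a (m * n) * congGamma (2 * m) n (m + 2) = congGamma (2 * m) n 2 * a 0 := by
  induction n with
  | zero => simp [congGamma]
  | succ n ih =>
    have hstep := h (m * n)
    simp only [congGamma, mul_add, mul_one] at hstep ⊢
    push_cast at hstep ⊢
    linear_combination congGamma (2 * m) n (m + 2) * hstep + (2 * m * n + 2 : ℝ) * ih

namespace Clover

noncomputable def density (m : ℕ) (t : ℝ) : ℝ := (1 - t ^ m) ^ (-(1 / 2) : ℝ)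

noncomputable def arcLength (m : ℕ) (r : ℝ) : ℝ := ∫ t in (0 : ℝ)..r, density m t

noncomputable def moment (m k : ℕ) : ℝ := ∫ t in (0 : ℝ)..1, t ^ k * density m t

variable {m : ℕ}

lemma density_pos (hm : m ≠ 0) {t : ℝ} (ht : t ∈ Ico (0 : ℝ) 1) : 0 < density m t :=
  Real.rpow_pos_of_pos (one_sub_pow_pos hm ht) _

lemma continuousOn_density (hm : m ≠ 0) : ContinuousOn (density m) (Ico 0 1) :=
  fun _ ht => ((continuous_const.sub (continuous_pow m)).continuousAt.rpow_const
    (Or.inl (one_sub_pow_pos hm ht).ne')).continuousWithinAt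

/-- The singularity at `t = 1` is dominated by `(1 - t) ^ (-1/2)`, since `1 - t ≤ 1 - t ^ m`. -/
lemma intervalIntegrable_pow_mul_density (hm : m ≠ 0) (k : ℕ) :
    IntervalIntegrable (fun t => t ^ k * density m t) volume 0 1 := by
  have hdom : IntervalIntegrable (fun t : ℝ => (1 - t) ^ (-(1 / 2) : ℝ)) volume 0 1 := by
    simpa using ((intervalIntegrable_rpow' (a := 0) (b := 1) (r := -(1 / 2))
      (by norm_num)).comp_sub_left 1).symm
  refine hdom.mono_fun' (Measurable.aestronglyMeasurable (by unfold density; fun_prop)) ?_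
  rw [Filter.EventuallyLE, ae_restrict_iff' measurableSet_uIoc, uIoc_of_le zero_le_one]
  refine Filter.Eventually.of_forall fun t ⟨ht0, ht1⟩ => ?_
  rcases ht1.eq_or_lt with rfl | ht1
  · simp [density]
  have hle : 1 - t ≤ 1 - t ^ m := by linarith [pow_le_of_le_one ht0.le ht1.le hm]
  have hdens : 0 ≤ density m t := (density_pos hm ⟨ht0.le, ht1⟩).le
  rw [Real.norm_of_nonneg (by positivity)]
  calc t ^ k * density m t ≤ 1 * (1 - t) ^ (-(1 / 2) : ℝ) :=
        mul_le_mul (pow_le_one₀ ht0.le ht1.le)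
          (Real.rpow_le_rpow_of_nonpos (by linarith) hle (by norm_num)) hdens zero_le_one
    _ = (1 - t) ^ (-(1 / 2) : ℝ) := one_mul _

lemma intervalIntegrable_density (hm : m ≠ 0) {r : ℝ} (hr : r ∈ Icc (0 : ℝ) 1) :
    IntervalIntegrable (density m) volume 0 r := by
  refine (by simpa using intervalIntegrable_pow_mul_density hm 0 :
    IntervalIntegrable (density m) volume 0 1).mono_set ?_
  rw [uIcc_of_le hr.1, uIcc_of_le zero_le_one]
  exact Icc_subset_Icc le_rfl hr.2

lemma hasDerivAt_pow_mul_sqrt_one_sub_pow (hm : m ≠ 0) (k : ℕ) {t : ℝ} (ht : t ∈ Ico (0 : ℝ) 1) :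
    HasDerivAt (fun s : ℝ => s ^ (k + 1) * (1 - s ^ m) ^ (1 / 2 : ℝ))
      ((k + 1) * (t ^ k * density m t)
        - (k + 1 + m / 2) * (t ^ (k + m) * density m t)) t := by
  have hpos := one_sub_pow_pos hm ht
  have hsqrt : (1 - t ^ m) ^ (1 / 2 : ℝ) = (1 - t ^ m) * density m t := by
    rw [density, ← Real.rpow_one_add' hpos.le (by norm_num)]
    norm_num
  have hpow : t ^ (k + m) = t ^ k * t ^ m := pow_add t k m
  have hpred : t ^ m = t * t ^ (m - 1) := by rw [← pow_succ']; congr 1; omega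
  refine ((hasDerivAt_pow (k + 1) t).mul
    (((hasDerivAt_pow m t).const_sub 1).rpow_const (p := 1 / 2) (Or.inl hpos.ne'))).congr_deriv ?_
  rw [hsqrt, hpow, show (1 / 2 : ℝ) - 1 = -(1 / 2) by norm_num, ← density, hpred]
  push_cast
  ring

lemma moment_add (hm : m ≠ 0) (k : ℕ) :
    (2 * k + m + 2) * moment m (k + m) = (2 * k + 2) * moment m k := by
  have hint_k := intervalIntegrable_pow_mul_density hm k
  have hint_km := intervalIntegrable_pow_mul_density hm (k + m)
  have hcont : ContinuousOn (fun s : ℝ => s ^ (k + 1) * (1 - s ^ m) ^ (1 / 2 : ℝ)) (Icc 0 1) :=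
    fun _ _ => ((continuous_pow _).continuousAt.mul
      ((continuous_const.sub (continuous_pow m)).continuousAt.rpow_const
        (Or.inr (by norm_num)))).continuousWithinAt
  have hftc := integral_eq_sub_of_hasDeriv_right_of_le zero_le_one hcont
    (fun t ht =>
      (hasDerivAt_pow_mul_sqrt_one_sub_pow hm k (Ioo_subset_Ico_self ht)).hasDerivWithinAt)
    ((hint_k.const_mul _).sub (hint_km.const_mul _))
  rw [integral_sub (hint_k.const_mul _) (hint_km.const_mul _), intervalIntegral.integral_const_mul,
    intervalIntegral.integral_const_mul] at hftc
  norm_num at hftc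
  unfold moment
  linarith

@[simp]
lemma arcLength_zero : arcLength m 0 = 0 := integral_same

lemma strictMonoOn_arcLength (hm : m ≠ 0) : StrictMonoOn (arcLength m) (Icc 0 1) := by
  intro a ha b hb hab
  have hpos : 0 < ∫ t in a..b, density m t := by
    refine intervalIntegral_pos_of_pos_on ?_ (fun t ht => density_pos hm
      ⟨ha.1.trans ht.1.le, ht.2.trans_le hb.2⟩) hab
    exact (intervalIntegrable_density hm hb).mono_set
      (by rw [uIcc_of_le hab.le, uIcc_of_le hb.1]; exact Icc_subset_Icc ha.1 le_rfl)
  rw [← integral_interval_sub_left (intervalIntegrable_density hm hb)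
    (intervalIntegrable_density hm ha)] at hpos
  exact sub_pos.1 hpos

lemma hasDerivAt_arcLength (hm : m ≠ 0) {t : ℝ} (ht : t ∈ Ioo (0 : ℝ) 1) :
    HasDerivAt (arcLength m) (density m t) t :=
  integral_hasDerivAt_right (intervalIntegrable_density hm (Ioo_subset_Icc_self ht))
    ((continuousOn_density hm).mono Ioo_subset_Ico_self |>.stronglyMeasurableAtFilter
      isOpen_Ioo t ht)
    ((continuousOn_density hm).continuousAt
      (mem_nhds_iff.2 ⟨Ioo 0 1, Ioo_subset_Ico_self, isOpen_Ioo, ht⟩))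

lemma image_arcLength_Ioo (hm : m ≠ 0) :
    arcLength m '' Ioo 0 1 = Ioo 0 (arcLength m 1) := by
  apply Subset.antisymm
  · rintro _ ⟨t, ht, rfl⟩
    have hmono := strictMonoOn_arcLength hm
    exact ⟨arcLength_zero (m := m) ▸ hmono ⟨le_rfl, zero_le_one⟩ (Ioo_subset_Icc_self ht) ht.1,
      hmono (Ioo_subset_Icc_self ht) ⟨zero_le_one, le_rfl⟩ ht.2⟩
  · have hcont : ContinuousOn (arcLength m) (Icc 0 1) := by
      rw [← uIcc_of_le zero_le_one]
      exact continuousOn_primitive_interval'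
        (intervalIntegrable_density hm ⟨zero_le_one, le_rfl⟩) left_mem_uIcc
    simpa using intermediate_value_Ioo zero_le_one hcont

lemma arcLength_one_pos (hm : m ≠ 0) : 0 < arcLength m 1 :=
  arcLength_zero (m := m) ▸
    strictMonoOn_arcLength hm ⟨le_rfl, zero_le_one⟩ ⟨zero_le_one, le_rfl⟩ zero_lt_one

lemma leftInvOn_arcLength (hm : m ≠ 0) {φ : ℝ → ℝ}
    (hφ : ∀ x ∈ Icc 0 (arcLength m 1), x = arcLength m (φ x))
    (hφ01 : ∀ x ∈ Icc 0 (arcLength m 1), φ x ∈ Icc (0 : ℝ) 1) :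
    LeftInvOn φ (arcLength m) (Icc 0 1) := by
  intro t ht
  have hmono := strictMonoOn_arcLength hm
  have hlt : arcLength m t ∈ Icc 0 (arcLength m 1) :=
    ⟨arcLength_zero (m := m) ▸ hmono.monotoneOn ⟨le_rfl, zero_le_one⟩ ht ht.1,
      hmono.monotoneOn ht ⟨zero_le_one, le_rfl⟩ ht.2⟩
  exact hmono.injOn (hφ01 _ hlt) ht (hφ _ hlt).symm

lemma abs_density_smul_eqOn (hm : m ≠ 0) (g : ℝ → ℝ) :
    EqOn (fun t => |density m t| • g (arcLength m t)) (fun t => density m t * g (arcLength m t))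
      (Ioo 0 1) := fun t ht => by
  dsimp only
  rw [smul_eq_mul, abs_of_pos (density_pos hm (Ioo_subset_Ico_self ht))]

lemma integrableOn_Ioo_arcLength_iff (hm : m ≠ 0) (g : ℝ → ℝ) :
    IntegrableOn g (Ioo 0 (arcLength m 1)) ↔
      IntegrableOn (fun t => density m t * g (arcLength m t)) (Ioo 0 1) := by
  rw [← image_arcLength_Ioo hm, integrableOn_image_iff_integrableOn_abs_deriv_smul measurableSet_Ioo
    (fun t ht => (hasDerivAt_arcLength hm ht).hasDerivWithinAt)
    ((strictMonoOn_arcLength hm).injOn.mono Ioo_subset_Icc_self)]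
  exact integrableOn_congr_fun (abs_density_smul_eqOn hm g) measurableSet_Ioo

lemma setIntegral_Ioo_arcLength (hm : m ≠ 0) (g : ℝ → ℝ) :
    ∫ x in Ioo 0 (arcLength m 1), g x = ∫ t in Ioo 0 1, density m t * g (arcLength m t) := by
  rw [← image_arcLength_Ioo hm, integral_image_eq_integral_abs_deriv_smul measurableSet_Ioo
    (fun t ht => (hasDerivAt_arcLength hm ht).hasDerivWithinAt)
    ((strictMonoOn_arcLength hm).injOn.mono Ioo_subset_Icc_self)]
  exact setIntegral_congr_fun measurableSet_Ioo (abs_density_smul_eqOn hm g)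

lemma pow_comp_arcLength_eqOn {φ : ℝ → ℝ} (hφ : LeftInvOn φ (arcLength m) (Ioo 0 1)) (k : ℕ) :
    EqOn (fun t => density m t * φ (arcLength m t) ^ k) (fun t => t ^ k * density m t)
      (Ioo 0 1) := fun t ht => by
  dsimp only
  rw [hφ ht, mul_comm]

lemma intervalIntegrable_pow_of_leftInvOn {φ : ℝ → ℝ} (hm : m ≠ 0)
    (hφ : LeftInvOn φ (arcLength m) (Ioo 0 1)) (k : ℕ) :
    IntervalIntegrable (fun x => φ x ^ k) volume 0 (arcLength m 1) := by
  rw [intervalIntegrable_iff_integrableOn_Ioo_of_le (arcLength_one_pos hm).le,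
    integrableOn_Ioo_arcLength_iff hm, integrableOn_congr_fun (pow_comp_arcLength_eqOn hφ k)
      measurableSet_Ioo, ← intervalIntegrable_iff_integrableOn_Ioo_of_le zero_le_one]
  exact intervalIntegrable_pow_mul_density hm k

lemma integral_pow_eq_moment_of_leftInvOn {φ : ℝ → ℝ} (hm : m ≠ 0)
    (hφ : LeftInvOn φ (arcLength m) (Ioo 0 1)) (k : ℕ) :
    ∫ x in (0 : ℝ)..arcLength m 1, φ x ^ k = moment m k := by
  rw [integral_of_le (arcLength_one_pos hm).le, integral_Ioc_eq_integral_Ioo,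
    setIntegral_Ioo_arcLength hm, setIntegral_congr_fun measurableSet_Ioo
      (pow_comp_arcLength_eqOn hφ k), moment, integral_of_le zero_le_one,
    integral_Ioc_eq_integral_Ioo]

end Clover

/-- **Explicit formula for `I_m(mn)`.**
Let `m ≥ 1`, `ϖ = 2 ∫_0^1 (1 - t^m)^(-1/2) dt`, `φ` the `m`-clover function, and
`I(n) = ∫_0^ϖ φ(x)^n dx`.  Then for all `n ≥ 1`,
`I(mn) Γ_{2m}(n, m+2) = Γ_{2m}(n, 2) ϖ`. -/
theorem clover_integral_formula_mn (m : ℕ) (hm : 1 ≤ m)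
    (ϖ : ℝ) (hϖ : ϖ = 2 * ∫ t in (0:ℝ)..1, (1 - t ^ m) ^ (-(1/2) : ℝ))
    (φ : ℝ → ℝ)
    (hφ : ∀ x ∈ Set.Icc 0 (ϖ / 2),
      x = ∫ t in (0:ℝ)..(φ x), (1 - t ^ m) ^ (-(1/2) : ℝ))
    (hφ01 : ∀ x ∈ Set.Icc 0 (ϖ / 2), φ x ∈ Set.Icc (0:ℝ) 1)
    (hφsymm : ∀ x ∈ Set.Icc 0 ϖ, φ (ϖ - x) = φ x)
    (I : ℕ → ℝ) (hI : ∀ n : ℕ, I n = ∫ x in (0:ℝ)..ϖ, φ x ^ n) :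
    ∀ n : ℕ, 1 ≤ n →
      I (m * n) * congGamma (2 * m) n (m + 2) = congGamma (2 * m) n 2 * ϖ := by
  have hm0 : m ≠ 0 := by omega
  have hhalf : ϖ / 2 = Clover.arcLength m 1 := by
    rw [hϖ]
    exact mul_div_cancel_left₀ _ two_ne_zero
  have hϖ_nonneg : 0 ≤ ϖ := by linarith [Clover.arcLength_one_pos hm0]
  rw [hhalf] at hφ hφ01
  have hinv := (Clover.leftInvOn_arcLength hm0 hφ hφ01).mono Ioo_subset_Icc_self
  have hI_moment (k : ℕ) : I k = 2 * Clover.moment m k := by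
    rw [hI, integral_eq_two_mul_integral_half_of_symm hϖ_nonneg
      (hhalf ▸ Clover.intervalIntegrable_pow_of_leftInvOn hm0 hinv k)
      (fun x hx => by rw [hφsymm x hx]), hhalf, Clover.integral_pow_eq_moment_of_leftInvOn hm0 hinv k]
  have hI_zero : I 0 = ϖ := by simp [hI]
  intro n _
  rw [← hI_zero]
  refine mul_congGamma_of_recurrence (fun k => ?_) n
  rw [hI_moment, hI_moment]
  linear_combination 2 * Clover.moment_add hm0 k
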